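/- For every integer m ≥ 2 and every k with 1 ≤ k ≤ m, the number 2·cos(kπ/(m+1)) is a double root of F_m(x) = Σ_{j=0}^{m} V_{2j}(x), i.e., both F_m and its derivative vanish at 2·cos(kπ/(m+1)). -/

import Mathlib

open Real

noncomputable def chebV (m : ℕ) (x : ℝ) : ℝ := (Polynomial.Chebyshev.U ℝ m).eval (x / 2)

noncomputable def chebF (m : ℕ) (x : ℝ) : ℝ := ∑ j ∈ Finset.range (m + 1), chebV (2 * j) x

/-! The even-index sum telescopes: `U_{2j} = U_j² - U_{j-1}²`, so `F_m = V_m²`. Hence every root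
of `V_m`, in particular each `2 cos (kπ/(m+1))`, is a root of `F_m` of multiplicity at least two. -/

namespace Polynomial.Chebyshev

variable (R : Type*) [CommRing R]

theorem U_add (m n : ℤ) : U R (m + n) = U R m * U R n - U R (m - 1) * U R (n - 1) := by
  induction n using Polynomial.Chebyshev.induct with
  | zero => simp
  | one => rw [U_add_one, U_one, sub_self, U_zero]; ring
  | add_two n ih1 ih2 =>
    have h₁ := U_add_two R (m + n)
    have h₂ := U_add_two R n
    have h₃ := U_add_two R (n - 1)
    linear_combination (norm := ring_nf)
      h₁ - U R m * h₂ + U R (m - 1) * h₃ + 2 * (X : R[X]) * ih1 - ih2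
  | neg_add_one n ih1 ih2 =>
    have h₁ := U_add_two R (m + (-n - 1))
    have h₂ := U_add_two R (-n - 1)
    have h₃ := U_add_two R (-n - 2)
    linear_combination (norm := ring_nf)
      h₁ - U R m * h₂ + U R (m - 1) * h₃ + 2 * (X : R[X]) * ih1 - ih2

theorem U_two_mul (n : ℤ) : U R (2 * n) = U R n ^ 2 - U R (n - 1) ^ 2 := by
  rw [two_mul, U_add]; ring

theorem sum_range_U_two_mul (m : ℕ) :
    ∑ j ∈ Finset.range (m + 1), U R (2 * j) = U R m ^ 2 := by
  induction m with
  | zero => simp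
  | succ m ih =>
    rw [Finset.sum_range_succ, ih, U_two_mul]
    push_cast
    ring_nf

theorem isRoot_U_real_cos {n k : ℕ} (hk : 1 ≤ k) (hkn : k ≤ n) :
    (U ℝ n).IsRoot (cos (k * π / (n + 1))) := by
  obtain ⟨j, rfl⟩ := Nat.exists_eq_add_of_le' hk
  rw [← mem_roots (U_ne_zero ℝ n (by omega)), roots_U_real, Finset.mem_val, Finset.mem_image]
  exact ⟨j, Finset.mem_range.2 (by omega), by push_cast; rfl⟩

end Polynomial.Chebyshev

open Polynomial.Chebyshev

theorem chebF_eq_sq (m : ℕ) : chebF m = fun x ↦ chebV m x ^ 2 := by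
  ext x
  simpa [chebF, chebV, Polynomial.eval_finsetSum] using
    congrArg (Polynomial.eval (x / 2)) (sum_range_U_two_mul ℝ m)

theorem differentiable_chebV (m : ℕ) : Differentiable ℝ (chebV m) :=
  (Polynomial.differentiable _).comp (differentiable_id.div_const (2 : ℝ))

theorem chebV_two_mul_cos_eq_zero {m k : ℕ} (hk1 : 1 ≤ k) (hkm : k ≤ m) :
    chebV m (2 * cos (k * π / (m + 1))) = 0 := by
  simpa [chebV] using isRoot_U_real_cos hk1 hkm

theorem chebF_double_root_general (m k : ℕ) (hk1 : 1 ≤ k) (hkm : k ≤ m) :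
    chebF m (2 * Real.cos (k * π / (m + 1))) = 0 ∧
    deriv (chebF m) (2 * Real.cos (k * π / (m + 1))) = 0 := by
  have hroot := chebV_two_mul_cos_eq_zero hk1 hkm
  rw [chebF_eq_sq, deriv_fun_pow (differentiable_chebV m _) 2]
  simp [hroot]

/-- For `m ≥ 2` and `1 ≤ k ≤ m`, the number `2 cos (kπ/(m+1))` is a double root of `F_m`:
both `F_m` and its derivative vanish there. -/
theorem chebF_double_root (m k : ℕ) (hm : 2 ≤ m) (hk1 : 1 ≤ k) (hkm : k ≤ m) :
    chebF m (2 * Real.cos (k * π / (m + 1))) = 0 ∧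
    deriv (chebF m) (2 * Real.cos (k * π / (m + 1))) = 0 :=
  chebF_double_root_general m k hk1 hkm
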